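/- arXiv:2308.08374 — 3 statements merged into one kernel-verified Lean document; each statement's English description precedes it below -/
import Mathlib

section
/- Let w be a word over Σ with alph(w) = Σ and let γ(w) be its first-occurrence order word. Then for every c ∈ ℕ, the word γ(w)^c · w satisfies: γ(γ(w)^c · w) = γ(w), and for every letter a ∈ Σ, ι_a(γ(w)^c · w) = ι_a(w) + c and R_a(γ(w)^c · w) = R_a(w). (This is the 'only if' direction of the pumping lemma for subsequence universality signatures.) -/
open List

section Defs

variable {α : Type*}

/-- A word `w` is `k`-universal if every word of length at most `k` is a subsequence of `w`. -/
def IsKUniversal [Fintype α] (k : ℕ) (w : List α) : Prop :=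
  ∀ u : List α, u.length ≤ k → u.Sublist w

/-- The universality index `ι(w)`: the largest `k` such that `w` is `k`-universal. -/
noncomputable def univIndex [Fintype α] (w : List α) : ℕ :=
  sSup {k | IsKUniversal k w}

/-- `c`-fold concatenation (power) of a word. -/
def wpow (u : List α) (c : ℕ) : List α := (List.replicate c u).flatten

/-- Auxiliary (fuelled) computation of the arch factorization: returns the list of
arches and the rest. Each arch is the shortest prefix of the remaining suffix
containing every letter of the alphabet. -/
noncomputable def archFactAux [Fintype α] [DecidableEq α] :
    ℕ → List α → List (List α) × List α
  | 0, w => ([], w)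
  | fuel + 1, w =>
    if Finset.univ ⊆ w.toFinset then
      let n := sInf {n | Finset.univ ⊆ (w.take n).toFinset}
      let p := archFactAux fuel (w.drop n)
      (w.take n :: p.1, p.2)
    else ([], w)

/-- The arch factorization of `w`: the list of arches together with the rest. -/
noncomputable def archFact [Fintype α] [DecidableEq α] (w : List α) :
    List (List α) × List α :=
  archFactAux w.length w

/-- `γ(w)`: the distinct letters of `w` in order of their first occurrence. -/
def gammaWord [DecidableEq α] (w : List α) : List α := w.reverse.dedup.reverse

/-- The suffix of `w` strictly after the first occurrence of the letter `a`. -/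
def afterFirst [DecidableEq α] (a : α) (w : List α) : List α :=
  w.drop (w.idxOf a + 1)

/-- `ι_a(w)`: the universality index of the suffix of `w` after the first occurrence of `a`. -/
noncomputable def iotaLetter [Fintype α] [DecidableEq α] (a : α) (w : List α) : ℕ :=
  univIndex (afterFirst a w)

/-- `R_a(w)`: the alphabet of the rest of the arch factorization of the suffix of `w`
after the first occurrence of `a`. -/
noncomputable def restLetter [Fintype α] [DecidableEq α] (a : α) (w : List α) : Finset α :=
  ((archFact (afterFirst a w)).2).toFinset

/-- `Subseq_k(w)`: the set of subsequences of `w` of length at most `k`. -/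
def subseqK (k : ℕ) (w : List α) : Set (List α) :=
  {u | u.length ≤ k ∧ u.Sublist w}

/-- Simon's congruence `u ∼_k v`. -/
def SimonCongr (k : ℕ) (u v : List α) : Prop := subseqK k u = subseqK k v

/-- Applying a substitution `h` to a pattern: replace each variable occurrence by its
image and leave terminal letters unchanged. -/
def applySub {X : Type*} (h : X → List α) (p : List (α ⊕ X)) : List α :=
  p.flatMap (Sum.elim (fun a => [a]) h)

/-- A permutation word of the alphabet: every letter occurs exactly once. -/
def IsPermWord [DecidableEq α] (γ : List α) : Prop :=
  ∀ a : α, γ.count a = 1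

end Defs

/-!
Let `v` contain every letter and fix a letter `a`. Write `v = p · a · v_a` with `a ∉ p`,
and `γ(v) = γ(p) · a · s`. The suffix of `γ(v) · v` after its first `a` is `s · p · a · v_a`,
and `s · p` contains exactly the letters other than `a`. So `s · p · a` is the first arch of
that suffix and what follows it is `v_a`: prepending `γ(v)` raises `ι_a` by one and leaves
`R_a` unchanged. Since `γ(γ(v) · v) = γ(v)`, this step can be iterated `c` times.
-/

lemma sublist_of_cons_sublist_append_cons {α : Type*} {b : α} {q u y : List α} (hb : b ∉ q)
    (h : b :: u <+ q ++ b :: y) : u <+ y := by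
  induction q with
  | nil => exact cons_sublist_cons.1 h
  | cons x q ih =>
    rw [cons_append, sublist_cons_iff] at h
    obtain h | ⟨r, hr, -⟩ := h
    · exact ih (fun hq => hb (mem_cons_of_mem x hq)) h
    · exact absurd (cons_eq_cons.1 hr).1 (fun hbx => hb (hbx ▸ mem_cons_self))

lemma mem_append_cons {α : Type*} {b : α} {q : List α} (hq : ∀ x, x ∈ q ↔ x ≠ b)
    (y : List α) (x : α) : x ∈ q ++ b :: y := by
  by_cases hxb : x = b <;> simp [hxb, hq]

section Universality

variable {α : Type*} [Fintype α]

lemma isKUniversal_zero (w : List α) : IsKUniversal 0 w := by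
  intro u hu
  rw [Nat.le_zero, length_eq_zero_iff] at hu
  exact hu ▸ nil_sublist w

lemma IsKUniversal.le_length [Nonempty α] {k : ℕ} {w : List α} (h : IsKUniversal k w) :
    k ≤ w.length := by
  simpa using (h (replicate k (Classical.arbitrary α)) (by simp)).length_le

lemma bddAbove_isKUniversal [Nonempty α] (w : List α) : BddAbove {k | IsKUniversal k w} :=
  ⟨w.length, fun _ hk => hk.le_length⟩

lemma isKUniversal_univIndex [Nonempty α] (w : List α) : IsKUniversal (univIndex w) w :=
  Nat.sSup_mem ⟨0, isKUniversal_zero w⟩ (bddAbove_isKUniversal w)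

lemma IsKUniversal.le_univIndex [Nonempty α] {k : ℕ} {w : List α} (h : IsKUniversal k w) :
    k ≤ univIndex w :=
  le_csSup (bddAbove_isKUniversal w) h

lemma univIndex_eq_succ_of_isKUniversal_succ_iff [Nonempty α] {x y : List α}
    (h : ∀ k, IsKUniversal (k + 1) x ↔ IsKUniversal k y) : univIndex x = univIndex y + 1 := by
  refine le_antisymm ?_ ((h _).2 (isKUniversal_univIndex y)).le_univIndex
  cases hm : univIndex x with
  | zero => exact Nat.zero_le _
  | succ m => exact Nat.succ_le_succ ((h m).1 (hm ▸ isKUniversal_univIndex x)).le_univIndex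

variable {b : α} {q y : List α}

lemma isKUniversal_succ_append_cons_iff (hq : ∀ x, x ∈ q ↔ x ≠ b) (k : ℕ) :
    IsKUniversal (k + 1) (q ++ b :: y) ↔ IsKUniversal k y := by
  constructor
  · intro h u hu
    exact sublist_of_cons_sublist_append_cons (fun hb => (hq b).1 hb rfl)
      (h (b :: u) (by simpa using hu))
  · rintro h (_ | ⟨x, u⟩) hu
    · exact nil_sublist _
    · have hx : [x] <+ q ++ [b] := singleton_sublist.2 (mem_append_cons hq [] x)
      simpa using hx.append (h u (by simpa using hu))

lemma univIndex_append_cons [Nonempty α] (hq : ∀ x, x ∈ q ↔ x ≠ b) :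
    univIndex (q ++ b :: y) = univIndex y + 1 :=
  univIndex_eq_succ_of_isKUniversal_succ_iff (isKUniversal_succ_append_cons_iff hq)

end Universality

section ArchFactorization

variable {α : Type*} [Fintype α] [DecidableEq α]

lemma archFactAux_nil [Nonempty α] (fuel : ℕ) : archFactAux fuel ([] : List α) = ([], []) := by
  cases fuel with
  | zero => rw [archFactAux]
  | succ fuel =>
    rw [archFactAux, if_neg]
    simpa using (Finset.univ_nonempty (α := α)).ne_empty

lemma sInf_univ_subset_toFinset_take_pos [Nonempty α] {w : List α}
    (h : Finset.univ ⊆ w.toFinset) : 0 < sInf {n | Finset.univ ⊆ (w.take n).toFinset} := by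
  have hmem : Finset.univ ⊆ (w.take (sInf {n | Finset.univ ⊆ (w.take n).toFinset})).toFinset :=
    Nat.sInf_mem (s := {n | Finset.univ ⊆ (w.take n).toFinset}) ⟨w.length, by simpa using h⟩
  refine Nat.pos_of_ne_zero fun h0 => ?_
  rw [h0, take_zero] at hmem
  exact Finset.univ_nonempty.ne_empty (Finset.subset_empty.1 hmem)

lemma archFactAux_eq_of_length_le [Nonempty α] {f₁ f₂ : ℕ} {w : List α}
    (h₁ : w.length ≤ f₁) (h₂ : w.length ≤ f₂) : archFactAux f₁ w = archFactAux f₂ w := by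
  induction f₁ generalizing w f₂ with
  | zero => rw [length_eq_zero_iff.1 (Nat.le_zero.1 h₁), archFactAux_nil, archFactAux_nil]
  | succ f₁ ih =>
    cases f₂ with
    | zero => rw [length_eq_zero_iff.1 (Nat.le_zero.1 h₂), archFactAux_nil, archFactAux_nil]
    | succ f₂ =>
      rw [archFactAux, archFactAux]
      split_ifs with hall
      · have hpos := sInf_univ_subset_toFinset_take_pos hall
        dsimp only
        rw [ih (f₂ := f₂) (by grind) (by grind)]
      · rfl

variable {b : α} {q y : List α}

lemma univ_subset_toFinset_take_iff (hq : ∀ x, x ∈ q ↔ x ≠ b) (n : ℕ) :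
    Finset.univ ⊆ ((q ++ b :: y).take n).toFinset ↔ q.length + 1 ≤ n := by
  have hb : (q ++ b :: y).idxOf b = q.length := by
    rw [idxOf_append_of_notMem fun h => (hq b).1 h rfl]
    simp
  have hidx : ∀ x, (q ++ b :: y).idxOf x ≤ q.length := by
    intro x
    by_cases hxb : x = b
    · rw [hxb, hb]
    · have hxq : x ∈ q := (hq x).2 hxb
      rw [idxOf_append_of_mem hxq]
      exact (idxOf_lt_length_of_mem hxq).le
  have hmem_take : ∀ x, x ∈ (q ++ b :: y).take n ↔ (q ++ b :: y).idxOf x < n :=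
    fun x => mem_take_iff_idxOf_lt (mem_append_cons hq y x)
  simp only [Finset.subset_iff, Finset.mem_univ, mem_toFinset, hmem_take, true_implies]
  exact ⟨fun h => hb ▸ @h b, fun h x => (hidx x).trans_lt h⟩

lemma archFact_append_cons [Nonempty α] (hq : ∀ x, x ∈ q ↔ x ≠ b) :
    archFact (q ++ b :: y) = ((q ++ [b]) :: (archFact y).1, (archFact y).2) := by
  have hfirst : sInf {n | Finset.univ ⊆ ((q ++ b :: y).take n).toFinset} = q.length + 1 := by
    simp_rw [univ_subset_toFinset_take_iff hq]
    exact csInf_Ici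
  have hlen : (q ++ b :: y).length = (q.length + y.length) + 1 := by simp; omega
  have hall : Finset.univ ⊆ (q ++ b :: y).toFinset :=
    fun x _ => mem_toFinset.2 (mem_append_cons hq y x)
  rw [archFact, hlen, archFactAux, if_pos hall]
  simp only [hfirst, take_length_add_append, drop_length_add_append, take_one, drop_one,
    head?_cons, tail_cons, Option.toList_some]
  rw [archFact, archFactAux_eq_of_length_le (f₂ := y.length) (by omega) le_rfl]

end ArchFactorization

lemma wpow_succ {α : Type*} (u : List α) (c : ℕ) : wpow u (c + 1) = u ++ wpow u c := by
  simp [wpow, replicate_succ]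

section FirstOccurrences

variable {α : Type*} [DecidableEq α]

lemma mem_gammaWord {a : α} {v : List α} : a ∈ gammaWord v ↔ a ∈ v := by
  simp [gammaWord]

lemma nodup_gammaWord (v : List α) : (gammaWord v).Nodup := by
  simpa [gammaWord] using nodup_dedup v.reverse

lemma gammaWord_gammaWord (v : List α) : gammaWord (gammaWord v) = gammaWord v := by
  simp [gammaWord]

lemma gammaWord_append_of_subset {u v : List α} (h : v ⊆ u) :
    gammaWord (u ++ v) = gammaWord u := by
  rw [gammaWord, reverse_append, dedup_append, Subset.union_eq_right, gammaWord]
  exact fun x hx => mem_dedup.2 (mem_reverse.2 (h (mem_reverse.1 hx)))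

lemma gammaWord_prefix_append (u v : List α) : gammaWord u <+: gammaWord (u ++ v) := by
  rw [gammaWord, gammaWord, reverse_append, dedup_append, reverse_prefix]
  exact suffix_union_right _ _

lemma gammaWord_append_singleton {u : List α} {a : α} (ha : a ∉ u) :
    gammaWord (u ++ [a]) = gammaWord u ++ [a] := by
  simp [gammaWord, ha]

lemma afterFirst_append_cons {a : α} {p : List α} (ha : a ∉ p) (x : List α) :
    afterFirst a (p ++ a :: x) = x := by
  rw [afterFirst, idxOf_append_of_notMem ha]
  simp

lemma eq_take_idxOf_append_cons_afterFirst {a : α} {v : List α} (ha : a ∈ v) :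
    v = v.take (v.idxOf a) ++ a :: afterFirst a v := by
  have hlt := idxOf_lt_length_of_mem ha
  conv_lhs => rw [← take_append_drop (v.idxOf a) v, drop_eq_getElem_cons hlt, getElem_idxOf hlt]
  rfl

lemma exists_afterFirst_gammaWord_append {a : α} {v : List α} (ha : a ∈ v) :
    ∃ q : List α, (∀ x, x ∈ q ↔ x ∈ v ∧ x ≠ a) ∧
      afterFirst a (gammaWord v ++ v) = q ++ a :: afterFirst a v := by
  set p := v.take (v.idxOf a)
  have hv : v = p ++ a :: afterFirst a v := eq_take_idxOf_append_cons_afterFirst ha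
  have hap : a ∉ p := fun h => lt_irrefl _ ((mem_take_iff_idxOf_lt ha).1 h)
  obtain ⟨X, hX⟩ : ∃ X, gammaWord v = gammaWord p ++ a :: X := by
    have h := gammaWord_prefix_append (p ++ [a]) (afterFirst a v)
    rw [gammaWord_append_singleton hap, append_assoc, singleton_append, ← hv] at h
    obtain ⟨X, hX⟩ := h
    exact ⟨X, by rw [← hX, append_assoc, singleton_append]⟩
  have haX : a ∉ X := by
    have hnd := nodup_gammaWord v
    rw [hX, nodup_append] at hnd
    exact (nodup_cons.1 hnd.2.1).1
  have hmem : ∀ x, x ∈ v ↔ x ∈ gammaWord p ∨ x = a ∨ x ∈ X := by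
    intro x
    rw [← mem_gammaWord, hX, mem_append, mem_cons]
  refine ⟨X ++ p, fun x => ?_, ?_⟩
  · rw [mem_append, hmem, mem_gammaWord]
    by_cases hxa : x = a
    · simp [hxa, hap, haX]
    · simp only [hxa, false_or, ne_eq, not_false_eq_true, and_true, or_comm]
  · rw [hX, append_assoc, cons_append, afterFirst_append_cons (mt mem_gammaWord.1 hap)]
    nth_rewrite 1 [hv]
    rw [append_assoc]

lemma gammaWord_wpow_append (w : List α) (c : ℕ) :
    gammaWord (wpow (gammaWord w) c ++ w) = gammaWord w := by
  cases c with
  | zero => simp [wpow, gammaWord]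
  | succ c =>
    rw [wpow_succ, append_assoc, gammaWord_append_of_subset, gammaWord_gammaWord]
    intro x hx
    simp only [wpow, mem_append, mem_flatten, mem_replicate] at hx
    rcases hx with ⟨_, ⟨-, rfl⟩, hx⟩ | hx
    exacts [hx, mem_gammaWord.2 hx]

end FirstOccurrences

section Pumping

variable {α : Type*} [Fintype α] [DecidableEq α] [Nonempty α] {v : List α}

lemma iotaLetter_gammaWord_append (hv : ∀ x, x ∈ v) (a : α) :
    iotaLetter a (gammaWord v ++ v) = iotaLetter a v + 1 := by
  obtain ⟨q, hq, hsplit⟩ := exists_afterFirst_gammaWord_append (hv a)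
  rw [iotaLetter, iotaLetter, hsplit, univIndex_append_cons fun x => by simp [hq, hv]]

lemma restLetter_gammaWord_append (hv : ∀ x, x ∈ v) (a : α) :
    restLetter a (gammaWord v ++ v) = restLetter a v := by
  obtain ⟨q, hq, hsplit⟩ := exists_afterFirst_gammaWord_append (hv a)
  rw [restLetter, restLetter, hsplit, archFact_append_cons fun x => by simp [hq, hv]]

end Pumping

/-- 'only if' direction of the pumping lemma for subsequence
universality signatures. -/
theorem stmt0 {α : Type*} [Fintype α] [DecidableEq α] [Nonempty α]
    (w : List α) (hw : w.toFinset = Finset.univ) (c : ℕ) :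
    gammaWord (wpow (gammaWord w) c ++ w) = gammaWord w ∧
    (∀ a : α, iotaLetter a (wpow (gammaWord w) c ++ w) = iotaLetter a w + c) ∧
    (∀ a : α, restLetter a (wpow (gammaWord w) c ++ w) = restLetter a w) := by
  have hall : ∀ c x, x ∈ wpow (gammaWord w) c ++ w :=
    fun _ x => mem_append_right _ (mem_toFinset.1 (hw ▸ Finset.mem_univ x))
  have hpump : ∀ c, wpow (gammaWord w) (c + 1) ++ w =
      gammaWord (wpow (gammaWord w) c ++ w) ++ (wpow (gammaWord w) c ++ w) := fun c => by
    rw [gammaWord_wpow_append, wpow_succ, append_assoc]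
  refine ⟨gammaWord_wpow_append w c, fun a => ?_, fun a => ?_⟩
  · induction c with
    | zero => simp [wpow]
    | succ c ih => rw [hpump, iotaLetter_gammaWord_append (hall c), ih, add_assoc]
  · induction c with
    | zero => simp [wpow]
    | succ c ih => rw [hpump, restLetter_gammaWord_append (hall c), ih]
end

section
/- For every word w over Σ with alph(w) = Σ, there exist a word w' over Σ and a constant c ∈ ℕ such that ι(w') ≤ (2^σ)^σ, γ(w') = γ(w), and for every letter a ∈ Σ, ι_a(w) = ι_a(w') + c and R_a(w') = R_a(w). (This is the 'if' direction of the pumping lemma: any word can be pumped down to one of universality index at most (2^σ)^σ with the same signature permutation and rest-alphabets, and all signature universality indices lowered by a common constant.) -/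
/-!
`ι(w)` is the number of arches of `w`, and for a letter `a` the word `w_a` is the part of
`ar₁(w)` after its first `a`, followed by `ar₂(w) ⋯ ar_m(w) r(w)`. The arch factorization of
`s z`, where `s` misses some letter, depends on `s` only through its alphabet. So if the maps
`a ↦ alph(r(ar₁(w)_a ar₂(w) ⋯ ar_{t+1}(w)))`, which take at most `(2^σ)^σ` values, agree at
`t = i < j`, deleting `ar_{i+2}(w) ⋯ ar_{j+1}(w)` lowers every `ι_a` by `j - i` and keeps `γ` and
every `R_a`. Repeating this while `ι(w) > (2^σ)^σ` yields `w'`.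
-/

open List

section

variable {α : Type*}

def Full (w : List α) : Prop := ∀ a, a ∈ w

theorem Full.append_right {u : List α} (h : Full u) (v : List α) : Full (u ++ v) :=
  fun a => mem_append_left v (h a)

theorem Full.append_left {v : List α} (h : Full v) (u : List α) : Full (u ++ v) :=
  fun a => mem_append_right u (h a)

theorem Full.mono {u v : List α} (h : Full u) (huv : u <+ v) : Full v :=
  fun a => huv.subset (h a)

theorem not_full_nil [Nonempty α] : ¬ Full ([] : List α) := fun h =>
  not_mem_nil (h (Classical.arbitrary α))

theorem Full.ne_nil [Nonempty α] {w : List α} (h : Full w) : w ≠ [] := by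
  rintro rfl
  exact not_full_nil h

theorem full_iff_univ_subset [Fintype α] [DecidableEq α] {w : List α} :
    Full w ↔ Finset.univ ⊆ w.toFinset := by
  simp [Full, Finset.subset_iff]

theorem full_append_congr [DecidableEq α] {s t : List α} (hst : s.toFinset = t.toFinset)
    (z : List α) : Full (s ++ z) ↔ Full (t ++ z) := by
  have hmem : ∀ a, a ∈ s ↔ a ∈ t := fun a => by
    rw [← mem_toFinset, hst, mem_toFinset]
  simp only [Full, mem_append, hmem]

theorem sublist_of_cons_sublist_append_cons_s1 {c : α} {p t y : List α} (hc : c ∉ p)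
    (h : c :: t <+ p ++ c :: y) : t <+ y := by
  obtain ⟨l₁, l₂, hl, h₁, h₂⟩ := sublist_append_iff.1 h
  cases l₁ with
  | nil =>
    rw [nil_append] at hl
    exact cons_sublist_cons.1 (hl ▸ h₂)
  | cons d l₁ =>
    obtain ⟨rfl, -⟩ := cons_eq_cons.1 hl
    exact absurd (h₁.subset mem_cons_self) hc

/-- Equivalently, `b` is the shortest prefix of itself containing every letter. -/
def IsArch (b : List α) : Prop := Full b ∧ ¬ Full b.dropLast

theorem IsArch.ne_nil [Nonempty α] {b : List α} (hb : IsArch b) : b ≠ [] := hb.1.ne_nil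

theorem IsArch.not_full_of_prefix {b p : List α} (hb : IsArch b) (hp : p <+: b)
    (hlt : p.length < b.length) : ¬ Full p := by
  obtain ⟨q, rfl⟩ := hp
  have hq : q ≠ [] := by rintro rfl; simp at hlt
  intro h
  exact hb.2 (by rw [dropLast_append_of_ne_nil hq]; exact h.append_right _)

theorem IsArch.getLast_not_mem_dropLast [Nonempty α] {b : List α} (hb : IsArch b) :
    b.getLast hb.ne_nil ∉ b.dropLast := by
  intro hc
  refine hb.2 fun a => ?_
  have ha := hb.1 a
  rw [← dropLast_append_getLast hb.ne_nil, mem_append, mem_singleton] at ha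
  rcases ha with ha | rfl
  · exact ha
  · exact hc

theorem IsArch.of_append_of_full {p y : List α} (hb : IsArch (p ++ y)) (hy : Full y) :
    IsArch y := by
  refine ⟨hy, fun h => hb.2 ?_⟩
  cases y with
  | nil => exact h.mono (by simp)
  | cons c y => rw [dropLast_append_of_ne_nil (cons_ne_nil c y)]; exact h.append_left p

theorem isArch_append_congr [DecidableEq α] [Nonempty α] {s t z : List α} (hs : ¬ Full s)
    (hst : s.toFinset = t.toFinset) (hb : IsArch (s ++ z)) : IsArch (t ++ z) := by
  have hz : z ≠ [] := by rintro rfl; exact hs (by simpa using hb.1)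
  refine ⟨(full_append_congr hst z).1 hb.1, ?_⟩
  have h := hb.2
  rw [dropLast_append_of_ne_nil hz] at h ⊢
  rwa [← full_append_congr hst]

theorem exists_lt_le_apply_eq {β : Type*} [Fintype β] (f : ℕ → β) {n : ℕ}
    (hn : Fintype.card β ≤ n) : ∃ i j, i < j ∧ j ≤ n ∧ f i = f j := by
  obtain ⟨x, y, hxy, hf⟩ := Fintype.exists_ne_map_eq_of_card_lt (fun t : Fin (n + 1) => f t)
    (by simpa using Nat.lt_succ_of_le hn)
  rcases lt_or_gt_of_ne (Fin.val_ne_of_ne hxy) with h | h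
  · exact ⟨x, y, h, Nat.lt_succ_iff.1 y.2, hf⟩
  · exact ⟨y, x, h, Nat.lt_succ_iff.1 x.2, hf.symm⟩

theorem gammaWord_append_of_full [DecidableEq α] {p : List α} (h : Full p) (q : List α) :
    gammaWord (p ++ q) = gammaWord p := by
  rw [gammaWord, gammaWord, reverse_append, Subset.dedup_append_right]
  intro x _
  exact mem_reverse.2 (h x)

theorem afterFirst_append_of_mem [DecidableEq α] {a : α} {p : List α} (h : a ∈ p) (q : List α) :
    afterFirst a (p ++ q) = afterFirst a p ++ q := by
  rw [afterFirst, afterFirst, idxOf_append_of_mem h,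
    drop_append_of_le_length (idxOf_lt_length_iff.2 h)]

section ArchFactorization

variable [Fintype α] [DecidableEq α]

noncomputable def archLen (w : List α) : ℕ := sInf {n | Finset.univ ⊆ (w.take n).toFinset}

theorem archFactAux_succ_of_full {w : List α} (h : Full w) (fuel : ℕ) :
    archFactAux (fuel + 1) w =
      (w.take (archLen w) :: (archFactAux fuel (w.drop (archLen w))).1,
        (archFactAux fuel (w.drop (archLen w))).2) := by
  rw [archFactAux, if_pos (full_iff_univ_subset.1 h)]
  rfl

theorem archFactAux_of_not_full {w : List α} (h : ¬ Full w) (fuel : ℕ) :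
    archFactAux fuel w = ([], w) := by
  cases fuel with
  | zero => rfl
  | succ fuel => rw [archFactAux, if_neg (mt full_iff_univ_subset.2 h)]

theorem archFact_of_not_full {w : List α} (h : ¬ Full w) : archFact w = ([], w) :=
  archFactAux_of_not_full h _

noncomputable def numArches (w : List α) : ℕ := (archFact w).1.length

noncomputable def archRest (w : List α) : List α := (archFact w).2

theorem numArches_of_not_full {w : List α} (h : ¬ Full w) : numArches w = 0 := by
  simp [numArches, archFact_of_not_full h]

theorem archRest_of_not_full {w : List α} (h : ¬ Full w) : archRest w = w := by
  simp [archRest, archFact_of_not_full h]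

variable [Nonempty α]

theorem isArch_take_archLen {w : List α} (h : Full w) : IsArch (w.take (archLen w)) := by
  have hlen : w.length ∈ {n | Finset.univ ⊆ (w.take n).toFinset} :=
    full_iff_univ_subset.1 (by rwa [take_length])
  have hle : archLen w ≤ w.length := Nat.sInf_le hlen
  have hfull : Full (w.take (archLen w)) := full_iff_univ_subset.2 (Nat.sInf_mem ⟨_, hlen⟩)
  have hpos : archLen w ≠ 0 := by
    intro h0
    rw [h0, take_zero] at hfull
    exact not_full_nil hfull
  refine ⟨hfull, fun hlast => ?_⟩
  have hlt : archLen w - 1 < archLen w := by omega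
  refine Nat.notMem_of_lt_sInf hlt (full_iff_univ_subset.1 ?_)
  rwa [dropLast_eq_take, length_take, min_eq_left hle, take_take,
    min_eq_left (by omega)] at hlast

theorem archLen_arch_append {b : List α} (hb : IsArch b) (v : List α) :
    archLen (b ++ v) = b.length := by
  have hmem : b.length ∈ {n | Finset.univ ⊆ ((b ++ v).take n).toFinset} :=
    full_iff_univ_subset.1 (by rw [take_left]; exact hb.1)
  refine le_antisymm (Nat.sInf_le hmem) (not_lt.1 fun hlt => ?_)
  have hfull := (isArch_take_archLen (hb.1.append_right v)).1
  rw [take_append_of_le_length hlt.le] at hfull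
  exact hb.not_full_of_prefix (take_prefix _ b) (by simpa using hlt) hfull

theorem archFactAux_eq_of_length_le_s1 {w : List α} {fuel fuel' : ℕ} (h : w.length ≤ fuel)
    (h' : w.length ≤ fuel') : archFactAux fuel w = archFactAux fuel' w := by
  induction fuel generalizing w fuel' with
  | zero =>
    rw [length_eq_zero_iff.1 (Nat.le_zero.1 h), archFactAux_of_not_full not_full_nil,
      archFactAux_of_not_full not_full_nil]
  | succ fuel ih =>
    by_cases hw : Full w
    · have hpos := length_pos_iff.2 (isArch_take_archLen hw).ne_nil
      simp only [length_take, lt_inf_iff] at hpos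
      obtain ⟨fuel', rfl⟩ : ∃ f, fuel' = f + 1 := ⟨fuel' - 1, by omega⟩
      rw [archFactAux_succ_of_full hw, archFactAux_succ_of_full hw,
        ih (fuel' := fuel') (by simp; omega) (by simp; omega)]
    · rw [archFactAux_of_not_full hw, archFactAux_of_not_full hw]

theorem archFact_arch_append {b : List α} (hb : IsArch b) (v : List α) :
    archFact (b ++ v) = (b :: (archFact v).1, (archFact v).2) := by
  have hlen : (b ++ v).length = v.length + b.length := by simp [Nat.add_comm]
  have hpos := length_pos_iff.2 hb.ne_nil
  obtain ⟨n, hn⟩ : ∃ n, b.length = n + 1 := ⟨b.length - 1, by omega⟩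
  rw [archFact, hlen, hn, ← Nat.add_assoc, archFactAux_succ_of_full (hb.1.append_right v),
    archLen_arch_append hb, take_left, drop_left,
    archFactAux_eq_of_length_le_s1 (fuel' := v.length) (by omega) le_rfl]
  rfl

theorem numArches_arch_append {b : List α} (hb : IsArch b) (v : List α) :
    numArches (b ++ v) = numArches v + 1 := by
  simp [numArches, archFact_arch_append hb]

theorem archRest_arch_append {b : List α} (hb : IsArch b) (v : List α) :
    archRest (b ++ v) = archRest v := by
  simp [archRest, archFact_arch_append hb]

theorem exists_isArch_append {w : List α} (h : Full w) : ∃ b v, IsArch b ∧ w = b ++ v :=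
  ⟨_, _, isArch_take_archLen h, (take_append_drop _ w).symm⟩

@[elab_as_elim]
theorem arch_induction {P : List α → Prop} (not_full : ∀ w, ¬ Full w → P w)
    (arch_append : ∀ b v, IsArch b → P v → P (b ++ v)) (w : List α) : P w := by
  by_cases h : Full w
  · obtain ⟨b, v, hb, hw⟩ := exists_isArch_append h
    rw [hw]
    exact arch_append b v hb (arch_induction not_full arch_append v)
  · exact not_full w h
termination_by w.length
decreasing_by subst hw; simpa using length_pos_iff.2 hb.ne_nil

theorem not_full_archRest (w : List α) : ¬ Full (archRest w) := by
  induction w using arch_induction with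
  | not_full w h => rwa [archRest_of_not_full h]
  | arch_append b v hb ih => rwa [archRest_arch_append hb]

theorem numArches_append (u v : List α) :
    numArches (u ++ v) = numArches u + numArches (archRest u ++ v) := by
  induction u using arch_induction with
  | not_full u h => rw [numArches_of_not_full h, archRest_of_not_full h, Nat.zero_add]
  | arch_append b u hb ih =>
    rw [append_assoc, numArches_arch_append hb, numArches_arch_append hb, archRest_arch_append hb,
      ih, Nat.add_right_comm]

theorem archRest_append (u v : List α) : archRest (u ++ v) = archRest (archRest u ++ v) := by
  induction u using arch_induction with
  | not_full u h => rw [archRest_of_not_full h]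
  | arch_append b u hb ih =>
    rw [append_assoc, archRest_arch_append hb, archRest_arch_append hb, ih]

theorem exists_flatten_append_archRest (w : List α) :
    ∃ A : List (List α), (∀ b ∈ A, IsArch b) ∧ A.length = numArches w ∧
      w = A.flatten ++ archRest w := by
  induction w using arch_induction with
  | not_full w h => exact ⟨[], by simp, by simp [numArches_of_not_full h],
      by simp [archRest_of_not_full h]⟩
  | arch_append b v hb ih =>
    obtain ⟨A, hA, hlen, hv⟩ := ih
    refine ⟨b :: A, ?_, ?_, ?_⟩
    · simpa [hb] using hA
    · simp [hlen, numArches_arch_append hb]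
    · rw [archRest_arch_append hb, flatten_cons, append_assoc, ← hv]

theorem numArches_flatten {D : List (List α)} (hD : ∀ b ∈ D, IsArch b) :
    numArches D.flatten = D.length ∧ archRest D.flatten = [] := by
  induction D with
  | nil => exact ⟨numArches_of_not_full not_full_nil, archRest_of_not_full not_full_nil⟩
  | cons b D ih =>
    obtain ⟨ihn, ihr⟩ := ih fun x hx => hD x (mem_cons_of_mem b hx)
    rw [flatten_cons, numArches_arch_append (hD b mem_cons_self),
      archRest_arch_append (hD b mem_cons_self), ihn, ihr, length_cons]
    exact ⟨rfl, rfl⟩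

theorem isKUniversal_numArches (w : List α) : IsKUniversal (numArches w) w := by
  induction w using arch_induction with
  | not_full w h =>
    intro u hu
    rw [numArches_of_not_full h, Nat.le_zero, length_eq_zero_iff] at hu
    exact hu ▸ nil_sublist w
  | arch_append b v hb ih =>
    rintro (_ | ⟨x, t⟩) hu
    · exact nil_sublist _
    · rw [numArches_arch_append hb, length_cons] at hu
      exact (singleton_sublist.2 (hb.1 x)).append (ih t (by omega))

theorem exists_length_eq_not_sublist (w : List α) :
    ∃ u : List α, u.length = numArches w + 1 ∧ ¬ u <+ w := by
  induction w using arch_induction with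
  | not_full w h =>
    obtain ⟨x, hx⟩ : ∃ x, x ∉ w := by simpa [Full] using h
    exact ⟨[x], by simp [numArches_of_not_full h], fun hs => hx (singleton_sublist.1 hs)⟩
  | arch_append b v hb ih =>
    obtain ⟨u, hlen, hu⟩ := ih
    have hc := hb.getLast_not_mem_dropLast
    have hsplit := dropLast_append_getLast hb.ne_nil
    set c := b.getLast hb.ne_nil
    refine ⟨c :: u, by simp [hlen, numArches_arch_append hb], fun hs => hu ?_⟩
    rw [← hsplit, append_assoc, singleton_append] at hs
    exact sublist_of_cons_sublist_append_cons_s1 hc hs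

theorem isKUniversal_iff_le_numArches {k : ℕ} {w : List α} :
    IsKUniversal k w ↔ k ≤ numArches w := by
  refine ⟨fun hk => not_lt.1 fun hlt => ?_, fun hk u hu => isKUniversal_numArches w u (hu.trans hk)⟩
  obtain ⟨u, hlen, hu⟩ := exists_length_eq_not_sublist w
  exact hu (hk u (by omega))

theorem univIndex_eq_numArches (w : List α) : univIndex w = numArches w := by
  have hset : {k | IsKUniversal k w} = Set.Iic (numArches w) := by
    ext k
    exact isKUniversal_iff_le_numArches
  rw [univIndex, hset, csSup_Iic]

theorem exists_isArch_of_not_full_append {s z : List α} (hs : ¬ Full s) (h : Full (s ++ z)) :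
    ∃ z₁ z₂, IsArch (s ++ z₁) ∧ z = z₁ ++ z₂ := by
  obtain ⟨b, v, hb, hbv⟩ := exists_isArch_append h
  rcases append_eq_append_iff.1 hbv with ⟨z₁, rfl, rfl⟩ | ⟨s', rfl, -⟩
  · exact ⟨z₁, v, hb, rfl⟩
  · exact absurd (hb.1.append_right s') hs

theorem numArches_append_congr {s t : List α} (hs : ¬ Full s) (hst : s.toFinset = t.toFinset)
    (z : List α) :
    numArches (s ++ z) = numArches (t ++ z) ∧
      (archRest (s ++ z)).toFinset = (archRest (t ++ z)).toFinset := by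
  by_cases h : Full (s ++ z)
  · obtain ⟨z₁, z₂, hb, rfl⟩ := exists_isArch_of_not_full_append hs h
    have hb' := isArch_append_congr hs hst hb
    rw [← append_assoc, ← append_assoc, numArches_arch_append hb, numArches_arch_append hb',
      archRest_arch_append hb, archRest_arch_append hb']
    exact ⟨rfl, rfl⟩
  · have h' : ¬ Full (t ++ z) := by rwa [← full_append_congr hst]
    rw [numArches_of_not_full h, numArches_of_not_full h', archRest_of_not_full h,
      archRest_of_not_full h', toFinset_append, toFinset_append, hst]
    exact ⟨rfl, rfl⟩

theorem numArches_append_isArch {s b : List α} (hs : ¬ Full s) (hb : IsArch b) :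
    numArches (s ++ b) = 1 ∨ numArches (s ++ b) = 2 ∧ archRest (s ++ b) = [] := by
  -- the first arch of `s ++ b` ends inside `b`, and a full remainder of `b` is again an arch
  obtain ⟨z₁, z₂, hz₁, rfl⟩ := exists_isArch_of_not_full_append hs (hb.1.append_left s)
  rw [← append_assoc, numArches_arch_append hz₁, archRest_arch_append hz₁]
  by_cases hz₂ : Full z₂
  · have ha := numArches_flatten (D := [z₂]) (by simpa using hb.of_append_of_full hz₂)
    simp only [flatten_cons, flatten_nil, append_nil, length_singleton] at ha
    rw [ha.1, ha.2]
    exact Or.inr ⟨rfl, rfl⟩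
  · exact Or.inl (by rw [numArches_of_not_full hz₂])

theorem numArches_append_flatten {s : List α} (hs : ¬ Full s) {D : List (List α)}
    (hD : ∀ b ∈ D, IsArch b) :
    numArches (s ++ D.flatten) = D.length ∨
      numArches (s ++ D.flatten) = D.length + 1 ∧ archRest (s ++ D.flatten) = [] := by
  induction D generalizing s with
  | nil => simp [numArches_of_not_full hs]
  | cons b D ih =>
    have hD' : ∀ x ∈ D, IsArch x := fun x hx => hD x (mem_cons_of_mem b hx)
    rw [flatten_cons, ← append_assoc, numArches_append (s ++ b), archRest_append (s ++ b),
      length_cons]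
    rcases numArches_append_isArch hs (hD b mem_cons_self) with h1 | ⟨h2, hrest⟩
    · rcases ih (not_full_archRest (s ++ b)) hD' with h | ⟨h, hnil⟩
      · exact Or.inl (by omega)
      · exact Or.inr ⟨by omega, hnil⟩
    · obtain ⟨hn, hr⟩ := numArches_flatten hD'
      rw [hrest, nil_append, h2, hn, hr]
      exact Or.inr ⟨by omega, rfl⟩

theorem numArches_append_flatten_of_toFinset_eq {s : List α} (hs : ¬ Full s)
    {D : List (List α)} (hD : ∀ b ∈ D, IsArch b)
    (hrest : (archRest (s ++ D.flatten)).toFinset = s.toFinset) :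
    numArches (s ++ D.flatten) = D.length := by
  -- one arch more would leave an empty rest, forcing `s = []`
  rcases numArches_append_flatten hs hD with h | ⟨h, hnil⟩
  · exact h
  · rw [hnil, toFinset_nil, eq_comm, toFinset_eq_empty_iff] at hrest
    rw [hrest, nil_append, (numArches_flatten hD).1] at h
    omega

theorem numArches_append_flatten_append {u : List α} {D : List (List α)}
    (hD : ∀ b ∈ D, IsArch b)
    (hrest : (archRest (u ++ D.flatten)).toFinset = (archRest u).toFinset) (z : List α) :
    numArches (u ++ D.flatten ++ z) = numArches (u ++ z) + D.length ∧
      (archRest (u ++ D.flatten ++ z)).toFinset = (archRest (u ++ z)).toFinset := by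
  rw [archRest_append] at hrest
  have hcount := numArches_append_flatten_of_toFinset_eq (not_full_archRest u) hD hrest
  obtain ⟨hn, hr⟩ := numArches_append_congr (not_full_archRest _) hrest z
  rw [append_assoc, numArches_append u, numArches_append u z, archRest_append u,
    archRest_append u z, ← append_assoc, numArches_append (archRest u ++ D.flatten),
    archRest_append (archRest u ++ D.flatten), hcount, hn, hr]
  exact ⟨by omega, rfl⟩

end ArchFactorization

section Pumping

variable [Fintype α] [DecidableEq α]

def PumpedDown (w w' : List α) (c : ℕ) : Prop :=
  gammaWord w' = gammaWord w ∧ (∀ a, iotaLetter a w = iotaLetter a w' + c) ∧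
    ∀ a, restLetter a w' = restLetter a w

theorem PumpedDown.refl (w : List α) : PumpedDown w w 0 :=
  ⟨rfl, fun _ => rfl, fun _ => rfl⟩

theorem PumpedDown.trans {u v w : List α} {c d : ℕ} (h₁ : PumpedDown u v c)
    (h₂ : PumpedDown v w d) : PumpedDown u w (c + d) :=
  ⟨h₂.1.trans h₁.1, fun a => by rw [h₁.2.1, h₂.2.1, Nat.add_assoc, Nat.add_comm d],
    fun a => (h₂.2.2 a).trans (h₁.2.2 a)⟩

variable [Nonempty α]

theorem pumpedDown_of_archRest_toFinset_eq {b P Z : List α} {D : List (List α)} (hb : Full b)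
    (hD : ∀ x ∈ D, IsArch x)
    (hrest : ∀ a, (archRest (afterFirst a b ++ P ++ D.flatten)).toFinset =
      (archRest (afterFirst a b ++ P)).toFinset) :
    PumpedDown (b ++ P ++ D.flatten ++ Z) (b ++ P ++ Z) D.length := by
  refine ⟨?_, fun a => ?_, fun a => ?_⟩
  · simp only [append_assoc, gammaWord_append_of_full hb]
  · have h := (numArches_append_flatten_append hD (hrest a) Z).1
    simp only [append_assoc] at h
    simp only [iotaLetter, univIndex_eq_numArches, append_assoc, afterFirst_append_of_mem (hb a),
      h]
  · have h := (numArches_append_flatten_append hD (hrest a) Z).2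
    simp only [append_assoc] at h
    simp only [restLetter, archRest, append_assoc, afterFirst_append_of_mem (hb a)] at h ⊢
    exact h.symm

theorem exists_pumpedDown_of_lt_numArches {w : List α}
    (h : (2 ^ Fintype.card α) ^ Fintype.card α < numArches w) :
    ∃ w' c, w'.length < w.length ∧ PumpedDown w w' c := by
  obtain ⟨A, hA, hlen, hw⟩ := exists_flatten_append_archRest w
  obtain ⟨b, T, rfl⟩ : ∃ b T, A = b :: T :=
    exists_cons_of_ne_nil (by rintro rfl; simp at hlen; omega)
  rw [length_cons] at hlen
  have hT : ∀ x ∈ T, IsArch x := fun x hx => hA x (mem_cons_of_mem b hx)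
  obtain ⟨i, j, hij, hj, hprofile⟩ := exists_lt_le_apply_eq
    (fun t a => (archRest (afterFirst a b ++ (T.take t).flatten)).toFinset)
    (n := T.length) (by rw [Fintype.card_fun, Fintype.card_finset]; omega)
  set D := (T.drop i).take (j - i)
  have hD : ∀ x ∈ D, IsArch x := fun x hx => hT x (mem_of_mem_drop (mem_of_mem_take hx))
  have htake : T.take j = T.take i ++ D := by
    rw [show j = i + (j - i) by omega, take_add]
  set Z := (T.drop j).flatten ++ archRest w
  have hsplit : w = b ++ (T.take i).flatten ++ D.flatten ++ Z := by
    conv_lhs => rw [hw, flatten_cons, ← take_append_drop j T, htake]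
    simp only [Z, flatten_append, append_assoc]
  refine ⟨b ++ (T.take i).flatten ++ Z, D.length, ?_, ?_⟩
  · have hDne : D.flatten ≠ [] := by
      obtain ⟨x, hx⟩ := exists_mem_of_length_pos (by simp [D]; omega : 0 < D.length)
      exact fun hnil => (hD x hx).ne_nil (flatten_eq_nil_iff.1 hnil x hx)
    conv_rhs => rw [hsplit]
    simpa using length_pos_iff.2 hDne
  · nth_rw 1 [hsplit]
    refine pumpedDown_of_archRest_toFinset_eq (hA b mem_cons_self).1 hD fun a => ?_
    rw [append_assoc, ← flatten_append, ← htake]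
    exact (congrFun hprofile a).symm

theorem exists_pumpedDown_univIndex_le (w : List α) :
    ∃ w' c, univIndex w' ≤ (2 ^ Fintype.card α) ^ Fintype.card α ∧ PumpedDown w w' c := by
  by_cases h : (2 ^ Fintype.card α) ^ Fintype.card α < numArches w
  · obtain ⟨w', c, hlen, hw'⟩ := exists_pumpedDown_of_lt_numArches h
    obtain ⟨w'', d, hle, hw''⟩ := exists_pumpedDown_univIndex_le w'
    exact ⟨w'', c + d, hle, hw'.trans hw''⟩
  · exact ⟨w, 0, by rw [univIndex_eq_numArches]; omega, PumpedDown.refl w⟩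
termination_by w.length

end Pumping

end

theorem stmt1_general {α : Type*} [Fintype α] [DecidableEq α] [Nonempty α]
    (w : List α) :
    ∃ (w' : List α) (c : ℕ),
      univIndex w' ≤ (2 ^ Fintype.card α) ^ Fintype.card α ∧
      gammaWord w' = gammaWord w ∧
      (∀ a : α, iotaLetter a w = iotaLetter a w' + c) ∧
      (∀ a : α, restLetter a w' = restLetter a w) :=
  exists_pumpedDown_univIndex_le w

/-- 'if' direction of the pumping lemma: pumping down to universality
index at most `(2^σ)^σ`. -/
theorem stmt1 {α : Type*} [Fintype α] [DecidableEq α] [Nonempty α]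
    (w : List α) (hw : w.toFinset = Finset.univ) :
    ∃ (w' : List α) (c : ℕ),
      univIndex w' ≤ (2 ^ Fintype.card α) ^ Fintype.card α ∧
      gammaWord w' = gammaWord w ∧
      (∀ a : α, iotaLetter a w = iotaLetter a w' + c) ∧
      (∀ a : α, restLetter a w' = restLetter a w) :=
  stmt1_general w
end

section
/- Let α and β be patterns over Σ and X, each containing at least one occurrence of a variable. Then for every k ∈ ℕ there exists a substitution h such that h(α) ∼_k h(β). -/
open List

/-!
Substitute for every variable one and the same `k`-universal word, e.g. `(a₁ ⋯ a_σ)^k`.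
Each image then contains it as a factor, so both images are `k`-universal: their sets
`Subseq_k` both consist of all words of length at most `k`, hence coincide.
-/

open List

section Universality

variable {α : Type*}

theorem isKUniversal_wpow [Fintype α] {L : List α} (hL : ∀ a, a ∈ L) (k : ℕ) :
    IsKUniversal k (wpow L k) := by
  induction k with
  | zero =>
    intro u hu
    simp [length_eq_zero_iff.mp (Nat.le_zero.mp hu)]
  | succ k ih =>
    rintro (_ | ⟨a, t⟩) hu
    · exact nil_sublist _
    · have hwpow : wpow L (k + 1) = L ++ wpow L k := by
        simp only [wpow, replicate_succ, flatten_cons]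
      rw [hwpow, ← singleton_append]
      exact (singleton_sublist.mpr (hL a)).append (ih t (by simpa using hu))

theorem IsKUniversal.mono [Fintype α] {k : ℕ} {w w' : List α} (hw : IsKUniversal k w)
    (hsub : w <+ w') : IsKUniversal k w' :=
  fun u hu => (hw u hu).trans hsub

theorem subseqK_eq_of_isKUniversal [Fintype α] {k : ℕ} {w : List α} (hw : IsKUniversal k w) :
    subseqK k w = {u | u.length ≤ k} :=
  Set.ext fun u => ⟨And.left, fun hu => ⟨hu, hw u hu⟩⟩

theorem IsKUniversal.simonCongr [Fintype α] {k : ℕ} {u v : List α} (hu : IsKUniversal k u)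
    (hv : IsKUniversal k v) : SimonCongr k u v := by
  rw [SimonCongr, subseqK_eq_of_isKUniversal hu, subseqK_eq_of_isKUniversal hv]

theorem sublist_applySub {X : Type*} (h : X → List α) {p : List (α ⊕ X)} {x : X}
    (hx : Sum.inr x ∈ p) : h x <+ applySub h p :=
  sublist_flatten_of_mem (mem_map_of_mem (f := Sum.elim (fun a => [a]) h) hx)

end Universality

theorem stmt5_general {α X : Type*} [Fintype α]
    (p q : List (α ⊕ X)) (hp : ∃ x : X, Sum.inr x ∈ p) (hq : ∃ y : X, Sum.inr y ∈ q)
    (k : ℕ) :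
    ∃ h : X → List α, SimonCongr k (applySub h p) (applySub h q) := by
  set U : List α := wpow Finset.univ.toList k
  have hU : IsKUniversal k U :=
    isKUniversal_wpow (fun a => Finset.mem_toList.mpr (Finset.mem_univ a)) k
  obtain ⟨x, hx⟩ := hp
  obtain ⟨y, hy⟩ := hq
  refine ⟨fun _ => U, IsKUniversal.simonCongr ?_ ?_⟩
  · exact hU.mono (sublist_applySub (fun _ => U) hx)
  · exact hU.mono (sublist_applySub (fun _ => U) hy)

/-- if both patterns contain at least one occurrence of a variable,
then for every `k` there is a substitution making the two images Simon `k`-congruent. -/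
theorem stmt5 {α X : Type*} [Fintype α] [DecidableEq α] [Nonempty α]
    (p q : List (α ⊕ X)) (hp : ∃ x : X, Sum.inr x ∈ p) (hq : ∃ y : X, Sum.inr y ∈ q)
    (k : ℕ) :
    ∃ h : X → List α, SimonCongr k (applySub h p) (applySub h q) :=
  stmt5_general p q hp hq k
end
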